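/- Let U ⊆ ℂ^N be open and S a finite index set. Let a = (a_{m,n}) and b = (b_{m,n}) be families of holomorphic functions U → ℂ indexed by m ∈ ℕ^S and n ∈ ℕ, each satisfying condition (O^{y,z}). Then the family c = (c_{m,n}) defined by the convolution c_{m,n} = Σ_{m₁+m₂=m, n₁+n₂=n} a_{m₁,n₁} · b_{m₂,n₂} again satisfies condition (O^{y,z}). In other words, the space O^{y,z}_λ(U) is closed under multiplication of formal power series Σ a_{m,n} y^m z^n. -/

import Mathlib

/-- The total degree `|m| = ∑_s m_s` of a multi-index `m ∈ ℕ^S`. -/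
def wtF {S : Type*} (m : S →₀ ℕ) : ℕ := m.sum fun _ v => v

/-- Condition `(O^{y,z})` on a family of functions `a_{m,n} : U → ℂ` (`m ∈ ℕ^S`, `n ∈ ℕ`):
there exists a continuous `C : U → [1, ∞)` such that
`|a_{m,n}(λ)| ≤ C(λ)^{|m|+n+1} · |m|^n` for all `λ ∈ U`
(with the convention `|m|^n = 1` when `|m| = n = 0`, which is the value of the
natural power `(|m| : ℝ) ^ n` at `|m| = n = 0`). -/
def CondOyz {N : ℕ} {S : Type*} (U : Set (Fin N → ℂ))
    (a : (S →₀ ℕ) → ℕ → (Fin N → ℂ) → ℂ) : Prop :=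
  ∃ C : (Fin N → ℂ) → ℝ, ContinuousOn C U ∧ (∀ x ∈ U, 1 ≤ C x) ∧
    ∀ (m : S →₀ ℕ) (n : ℕ), ∀ x ∈ U, ‖a m n x‖ ≤
      C x ^ (wtF m + n + 1) * (wtF m : ℝ) ^ n

/-!
Bound each of the at most `2^|m| (n+1) ≤ 2^(|m|+n)` terms of `c_{m,n}` separately. For
`m₁ + m₂ = m` and `n₁ + n₂ = n`, with `D = max C_a C_b`, the term `a_{m₁,n₁} b_{m₂,n₂}` is at most
`D^(|m|+n+2) |m₁|^n₁ |m₂|^n₂ ≤ D^(|m|+n+2) |m|^n`, so `C = 2 D²` works for `c`.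
-/

open Finset

lemma wtF_eq_degree {S : Type*} (m : S →₀ ℕ) : wtF m = m.degree := rfl

lemma wtF_add {S : Type*} (m₁ m₂ : S →₀ ℕ) : wtF (m₁ + m₂) = wtF m₁ + wtF m₂ := by
  simp only [wtF_eq_degree, map_add]

lemma card_antidiagonal_le_two_pow_wtF {S : Type*} [DecidableEq S] (m : S →₀ ℕ) :
    #(antidiagonal m) ≤ 2 ^ wtF m := by
  -- `antidiagonal m` is by definition the support of the image of the multiset antidiagonal
  -- of `toMultiset m`, which has `2 ^ |m|` elements counted with multiplicity.
  have h := Multiset.toFinset_card_le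
    ((Finsupp.toMultiset m).antidiagonal.map (Prod.map Multiset.toFinsupp Multiset.toFinsupp))
  rwa [Multiset.card_map, Multiset.card_antidiagonal, Finsupp.card_toMultiset,
    ← Multiset.toFinsupp_support] at h

lemma pow_mul_pow_le_add_pow {x y : ℝ} (hx : 0 ≤ x) (hy : 0 ≤ y) (k l : ℕ) :
    x ^ k * y ^ l ≤ (x + y) ^ (k + l) := by
  rw [pow_add]
  gcongr <;> linarith

section Convolution

variable {R S : Type*} [NormedRing R] [DecidableEq S] {D : ℝ}

lemma norm_mul_le_of_mem_antidiagonal {f g : (S →₀ ℕ) → ℕ → R}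
    (hD : 0 ≤ D) (hf : ∀ m n, ‖f m n‖ ≤ D ^ (wtF m + n + 1) * (wtF m : ℝ) ^ n)
    (hg : ∀ m n, ‖g m n‖ ≤ D ^ (wtF m + n + 1) * (wtF m : ℝ) ^ n)
    {m : S →₀ ℕ} {n : ℕ} {p : (S →₀ ℕ) × (S →₀ ℕ)} {q : ℕ × ℕ}
    (hp : p ∈ antidiagonal m) (hq : q ∈ antidiagonal n) :
    ‖f p.1 q.1 * g p.2 q.2‖ ≤ D ^ (wtF m + n + 2) * (wtF m : ℝ) ^ n := by
  rw [HasAntidiagonal.mem_antidiagonal] at hp hq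
  have hwt : wtF p.1 + wtF p.2 = wtF m := by rw [← wtF_add, hp]
  calc ‖f p.1 q.1 * g p.2 q.2‖
      ≤ (D ^ (wtF p.1 + q.1 + 1) * (wtF p.1 : ℝ) ^ q.1) *
          (D ^ (wtF p.2 + q.2 + 1) * (wtF p.2 : ℝ) ^ q.2) :=
        (norm_mul_le _ _).trans (mul_le_mul (hf _ _) (hg _ _) (norm_nonneg _) (by positivity))
    _ = D ^ (wtF m + n + 2) * ((wtF p.1 : ℝ) ^ q.1 * (wtF p.2 : ℝ) ^ q.2) := by
        rw [← hq, ← hwt]; ring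
    _ ≤ D ^ (wtF m + n + 2) * (wtF m : ℝ) ^ n := by
        gcongr
        simpa only [← hq, ← hwt, Nat.cast_add] using
          pow_mul_pow_le_add_pow (Nat.cast_nonneg (wtF p.1)) (Nat.cast_nonneg (wtF p.2)) q.1 q.2

lemma norm_convolution_le {f g : (S →₀ ℕ) → ℕ → R}
    (hD : 1 ≤ D) (hf : ∀ m n, ‖f m n‖ ≤ D ^ (wtF m + n + 1) * (wtF m : ℝ) ^ n)
    (hg : ∀ m n, ‖g m n‖ ≤ D ^ (wtF m + n + 1) * (wtF m : ℝ) ^ n) (m : S →₀ ℕ) (n : ℕ) :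
    ‖∑ p ∈ antidiagonal m, ∑ q ∈ antidiagonal n, f p.1 q.1 * g p.2 q.2‖ ≤
      (2 * D ^ 2) ^ (wtF m + n + 1) * (wtF m : ℝ) ^ n := by
  set B := D ^ (wtF m + n + 2) * (wtF m : ℝ) ^ n
  have hterms : ∀ p ∈ antidiagonal m, ∀ q ∈ antidiagonal n, ‖f p.1 q.1 * g p.2 q.2‖ ≤ B :=
    fun p hp q hq => norm_mul_le_of_mem_antidiagonal (by linarith) hf hg hp hq
  have hcard : (#(antidiagonal m) : ℝ) * #(antidiagonal n) ≤ 2 ^ (wtF m + n) := by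
    rw [pow_add, Nat.card_antidiagonal]
    gcongr
    · exact_mod_cast card_antidiagonal_le_two_pow_wtF m
    · exact_mod_cast Nat.lt_two_pow_self
  calc _ ≤ ∑ p ∈ antidiagonal m, ∑ q ∈ antidiagonal n, ‖f p.1 q.1 * g p.2 q.2‖ :=
        (norm_sum_le _ _).trans (sum_le_sum fun _ _ => norm_sum_le _ _)
    _ ≤ ∑ p ∈ antidiagonal m, ∑ q ∈ antidiagonal n, B :=
        sum_le_sum fun p hp => sum_le_sum fun q hq => hterms p hp q hq
    _ = #(antidiagonal m) * #(antidiagonal n) * B := by simp only [sum_const, nsmul_eq_mul]; ring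
    _ ≤ 2 ^ (wtF m + n) * B := by gcongr
    _ ≤ 2 ^ (wtF m + n + 1) * D ^ (2 * (wtF m + n + 1)) * (wtF m : ℝ) ^ n := by
        have h2 : (2 : ℝ) ^ (wtF m + n) ≤ 2 ^ (wtF m + n + 1) :=
          pow_le_pow_right₀ one_le_two (by omega)
        have hDpow : D ^ (wtF m + n + 2) ≤ D ^ (2 * (wtF m + n + 1)) :=
          pow_le_pow_right₀ hD (by omega)
        rw [← mul_assoc]
        exact mul_le_mul_of_nonneg_right (mul_le_mul h2 hDpow (by positivity) (by positivity))
          (by positivity)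
    _ = (2 * D ^ 2) ^ (wtF m + n + 1) * (wtF m : ℝ) ^ n := by rw [mul_pow, ← pow_mul]

end Convolution

theorem stmt_5_general {N : ℕ} {S : Type*} [DecidableEq S] (U : Set (Fin N → ℂ))
    (a b : (S →₀ ℕ) → ℕ → (Fin N → ℂ) → ℂ)
    (ha : CondOyz U a) (hb : CondOyz U b) :
    CondOyz U (fun m n x =>
      ∑ p ∈ Finset.HasAntidiagonal.antidiagonal m, ∑ pn ∈ Finset.HasAntidiagonal.antidiagonal n,
        a p.1 pn.1 x * b p.2 pn.2 x) := by
  obtain ⟨Ca, hCa, hCa1, hCaB⟩ := ha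
  obtain ⟨Cb, hCb, hCb1, hCbB⟩ := hb
  refine ⟨fun x => 2 * max (Ca x) (Cb x) ^ 2, continuousOn_const.mul ((hCa.sup hCb).pow 2),
    fun x hx => ?_, fun m n x hx => ?_⟩
  · have := one_le_pow₀ (n := 2) ((hCa1 x hx).trans (le_max_left (Ca x) (Cb x)))
    linarith
  · refine norm_convolution_le ((hCa1 x hx).trans (le_max_left _ _))
      (fun m n => (hCaB m n x hx).trans ?_) (fun m n => (hCbB m n x hx).trans ?_) m n
    · have := hCa1 x hx
      gcongr
      exact le_max_left _ _
    · have := hCb1 x hx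
      gcongr
      exact le_max_right _ _

/-- If `a` and `b` are families of holomorphic functions on `U` satisfying
condition `(O^{y,z})`, then the convolution family
`c_{m,n} = ∑_{m₁+m₂=m, n₁+n₂=n} a_{m₁,n₁} · b_{m₂,n₂}` again satisfies `(O^{y,z})`:
the space `O^{y,z}_λ(U)` is closed under multiplication of formal power series
`∑ a_{m,n} y^m z^n`. -/
theorem stmt_5 {N : ℕ} {S : Type*} [DecidableEq S] (U : Set (Fin N → ℂ))
    (a b : (S →₀ ℕ) → ℕ → (Fin N → ℂ) → ℂ)
    (haH : ∀ m n, DifferentiableOn ℂ (a m n) U)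
    (hbH : ∀ m n, DifferentiableOn ℂ (b m n) U)
    (ha : CondOyz U a) (hb : CondOyz U b) :
    CondOyz U (fun m n x =>
      ∑ p ∈ Finset.HasAntidiagonal.antidiagonal m, ∑ pn ∈ Finset.HasAntidiagonal.antidiagonal n,
        a p.1 pn.1 x * b p.2 pn.2 x) :=
  stmt_5_general U a b ha hb
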